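/- arXiv:1502.01267 — 5 statements merged into one kernel-verified Lean document; each statement's English description precedes it below -/
import Mathlib

section
/- Let M be a von Neumann algebra acting on a complex Hilbert space H and let a be a positive element of M. Then a belongs to the center of M if and only if s a s ≤ a (in the Loewner order) for every selfadjoint unitary element s of M. -/
/-!
If `s a s ≤ a` for a symmetry `s`, conjugating by `s` gives `a ≤ s a s`, so `a` commutes with every
symmetry of `M`, hence with every projection `p ∈ M` through the symmetry `2p - 1`. It remains to
see that `M` is the norm closure of the algebra generated by its projections. For selfadjoint
`c ∈ M` cut the interval `[-‖c‖, ‖c‖]` into steps of length `δ` and let `hᵢ = gᵢ(c)` for the ramps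
`gᵢ` rising from `0` to `1` on the `i`-th step, so that `c = -‖c‖ + δ ∑ hᵢ`. The projection `pᵢ`
onto `ker (1 - hᵢ)` lies in `M`, since this kernel is invariant under the commutant, and
`hᵢ₊₁ ≤ pᵢ ≤ hᵢ`. The sums `∑ hᵢ` and `∑ pᵢ` therefore differ by at most `1`, and
`-‖c‖ + δ ∑ pᵢ` is within `δ` of `c`.
-/

open ComplexStarModule

section StarOrderedRing

variable {A : Type*} [Ring A] [StarRing A] [PartialOrder A] [StarOrderedRing A]

lemma IsStarProjection.le_of_mul_eq {p h : A} (hp : IsStarProjection p) (hh : 0 ≤ h)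
    (hhp : h * p = p) : p ≤ h := by
  have hph : p * h = p := by
    simpa [hp.isSelfAdjoint.star_eq, (IsSelfAdjoint.of_nonneg hh).star_eq] using
      congr(star $hhp)
  have : h - p = star (1 - p) * h * (1 - p) := by
    simp only [star_sub, star_one, hp.isSelfAdjoint.star_eq, sub_mul, mul_sub, one_mul, mul_one,
      hph, hhp, hp.isIdempotentElem.eq]
    abel
  exact sub_nonneg.mp (this ▸ star_left_conjugate_nonneg hh _)

lemma IsStarProjection.ge_of_mul_eq {p h : A} (hp : IsStarProjection p) (hh : h ≤ 1)
    (hph : p * h = h) : h ≤ p := by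
  have hsa : IsSelfAdjoint h := by
    simpa using (IsSelfAdjoint.one A).sub (IsSelfAdjoint.of_nonneg (sub_nonneg.mpr hh))
  have hhp : h * p = h := by
    simpa [hp.isSelfAdjoint.star_eq, hsa.star_eq] using congr(star $hph)
  calc h = star p * h * p := by rw [hp.isSelfAdjoint.star_eq, hph, hhp]
    _ ≤ star p * 1 * p := star_left_conjugate_le_conjugate hh p
    _ = p := by rw [hp.isSelfAdjoint.star_eq, mul_one, hp.isIdempotentElem.eq]

lemma commute_of_conj_le {a s : A} (hs : IsSelfAdjoint s) (hss : s * s = 1)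
    (hle : s * a * s ≤ a) : Commute a s := by
  have hge : a ≤ s * a * s := by
    simpa [hs.star_eq, ← mul_assoc, hss, mul_assoc _ s s] using
      star_left_conjugate_le_conjugate hle s
  calc a * s = s * a * s * s := by rw [le_antisymm hle hge]
    _ = s * a := by rw [mul_assoc _ s s, hss, mul_one]

end StarOrderedRing

section ComplexAlgebra

variable {A : Type*} [Ring A] [Algebra ℂ A]

lemma IsStarProjection.two_smul_sub_one_mul_self [StarRing A] {p : A} (hp : IsStarProjection p) :
    ((2 : ℂ) • p - 1) * ((2 : ℂ) • p - 1) = 1 := by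
  simp only [sub_mul, mul_sub, smul_mul_smul_comm, hp.isIdempotentElem.eq, mul_one, one_mul]
  module

lemma Commute.of_two_smul_sub_one {a p : A} (h : Commute a ((2 : ℂ) • p - 1)) : Commute a p := by
  simpa [smul_smul] using (h.add_right (Commute.one_right a)).smul_right (2⁻¹ : ℂ)

variable [StarRing A] [StarModule ℂ A]

lemma IsStarProjection.isSelfAdjoint_two_smul_sub_one {p : A} (hp : IsStarProjection p) :
    IsSelfAdjoint ((2 : ℂ) • p - 1) :=
  ((IsSelfAdjoint.ofNat 2 : IsSelfAdjoint (2 : ℂ)).smul hp.isSelfAdjoint).sub (.one A)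

lemma StarSubalgebra.realPart_mem {S : StarSubalgebra ℂ A} {a : A} (ha : a ∈ S) :
    (ℜ a : A) ∈ S := by
  rw [realPart_apply_coe, ← Complex.coe_smul]
  exact S.smul_mem (add_mem ha (star_mem ha)) _

lemma StarSubalgebra.imaginaryPart_mem {S : StarSubalgebra ℂ A} {a : A} (ha : a ∈ S) :
    (ℑ a : A) ∈ S := by
  rw [imaginaryPart_apply_coe, ← Complex.coe_smul]
  exact S.smul_mem (S.smul_mem (sub_mem ha (star_mem ha)) _) _

end ComplexAlgebra

/-- `ramp l δ` rises linearly from `0` at `l` to `1` at `l + δ` (and is `0` when `δ = 0`). -/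
noncomputable def ramp (l δ t : ℝ) : ℝ := (min t (l + δ) - min t l) / δ

namespace ramp

variable {l δ : ℝ}

@[fun_prop]
lemma continuous (l δ : ℝ) : Continuous (ramp l δ) := by
  unfold ramp; fun_prop

lemma nonneg (hδ : 0 ≤ δ) (t : ℝ) : 0 ≤ ramp l δ t :=
  div_nonneg (sub_nonneg.mpr (min_le_min_left t (by linarith))) hδ

lemma le_one (hδ : 0 ≤ δ) (t : ℝ) : ramp l δ t ≤ 1 := by
  unfold ramp
  rcases hδ.eq_or_lt with rfl | hδ
  · simp
  rw [div_le_one hδ]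
  rcases le_total t l with h | h
  · rw [min_eq_left h, min_eq_left (by linarith)]; linarith
  · rw [min_eq_right h]; linarith [min_le_right t (l + δ)]

lemma eq_zero_of_le (hδ : 0 ≤ δ) {t : ℝ} (ht : t ≤ l) : ramp l δ t = 0 := by
  simp [ramp, min_eq_left ht, min_eq_left (ht.trans (le_add_of_nonneg_right hδ))]

lemma eq_one_of_le (hδ : 0 < δ) {t : ℝ} (ht : l + δ ≤ t) : ramp l δ t = 1 := by
  simp [ramp, min_eq_right ht, min_eq_right (show l ≤ t by linarith), hδ.ne']

lemma one_sub_mul_ramp_add (hδ : 0 < δ) (t : ℝ) : (1 - ramp l δ t) * ramp (l + δ) δ t = 0 := by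
  rcases le_total t (l + δ) with h | h
  · rw [eq_zero_of_le hδ.le h, mul_zero]
  · rw [eq_one_of_le hδ h, sub_self, zero_mul]

lemma sum_range (N : ℕ) {t : ℝ} (hl : l ≤ t) (hu : t ≤ l + N * δ) :
    ∑ i ∈ Finset.range N, ramp (l + i * δ) δ t = (t - l) / δ := by
  have hstep (i : ℕ) : l + i * δ + δ = l + ((i + 1 : ℕ) : ℝ) * δ := by push_cast; ring
  simp only [ramp, hstep, ← Finset.sum_div]
  rw [Finset.sum_range_sub (fun i : ℕ => min t (l + i * δ))]
  simp [min_eq_left hu, min_eq_right hl]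

end ramp

lemma sum_range_le_add_sum_of_succ_le {α : Type*} [AddCommGroup α] [PartialOrder α]
    [IsOrderedAddMonoid α] {f g : ℕ → α} {N : ℕ} (hfg : ∀ i < N, f (i + 1) ≤ g i)
    (hN : 0 ≤ f N) : ∑ i ∈ Finset.range N, f i ≤ f 0 + ∑ i ∈ Finset.range N, g i := by
  have hshift : ∑ i ∈ Finset.range N, f (i + 1) ≤ ∑ i ∈ Finset.range N, g i :=
    Finset.sum_le_sum fun i hi => hfg i (Finset.mem_range.mp hi)
  calc ∑ i ∈ Finset.range N, f i ≤ ∑ i ∈ Finset.range N, f i + f N := le_add_of_nonneg_right hN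
    _ = ∑ i ∈ Finset.range N, f (i + 1) + f 0 :=
      ((Finset.sum_range_succ' f N).symm.trans (Finset.sum_range_succ f N)).symm
    _ ≤ f 0 + ∑ i ∈ Finset.range N, g i := by rw [add_comm]; gcongr

section CStarAlgebra

variable {A : Type*} [CStarAlgebra A]

lemma cfc_sum_ramp {a : A} (ha : IsSelfAdjoint a) {l δ : ℝ} (hδ : δ ≠ 0) {N : ℕ}
    (hspec : spectrum ℝ a ⊆ Set.Icc l (l + N * δ)) :
    a = algebraMap ℝ A l + δ • ∑ i ∈ Finset.range N, cfc (ramp (l + i * δ) δ) a := calc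
  a = cfc (fun t => t) a := (cfc_id' ℝ a).symm
  _ = cfc (fun t => l + δ * ∑ i ∈ Finset.range N, ramp (l + i * δ) δ t) a := by
    refine cfc_congr fun t ht => ?_
    rw [ramp.sum_range N (hspec ht).1 (hspec ht).2]
    field_simp
    ring
  _ = algebraMap ℝ A l + δ • ∑ i ∈ Finset.range N, cfc (ramp (l + i * δ) δ) a := by
    rw [cfc_const_add _ _ _ (by fun_prop), cfc_const_mul _ _ _ (by fun_prop),
      ← cfc_sum _ _ _ fun i _ => by fun_prop]
    congr
    ext t
    simp

lemma norm_sum_sub_sum_le_one_of_interlace [PartialOrder A] [StarOrderedRing A]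
    {h p : ℕ → A} {N : ℕ} (hph : ∀ i, p i ≤ h i) (hhp : ∀ i, h (i + 1) ≤ p i)
    (hN : 0 ≤ h N) (h0 : h 0 ≤ 1) :
    ‖∑ i ∈ Finset.range N, h i - ∑ i ∈ Finset.range N, p i‖ ≤ 1 := by
  have hnonneg : 0 ≤ ∑ i ∈ Finset.range N, h i - ∑ i ∈ Finset.range N, p i :=
    sub_nonneg.mpr (Finset.sum_le_sum fun i _ => hph i)
  refine (CStarAlgebra.norm_le_one_iff_of_nonneg _ hnonneg).mpr (sub_le_iff_le_add.mpr ?_)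
  calc ∑ i ∈ Finset.range N, h i ≤ h 0 + ∑ i ∈ Finset.range N, p i :=
        sum_range_le_add_sum_of_succ_le (fun i _ => hhp i) hN
    _ ≤ 1 + ∑ i ∈ Finset.range N, p i := by gcongr

end CStarAlgebra

section HilbertSpace

variable {H : Type*} [NormedAddCommGroup H] [InnerProductSpace ℂ H] [CompleteSpace H]

namespace ContinuousLinearMap

lemma mul_starProjection_ker (x : H →L[ℂ] H) : x * x.ker.starProjection = 0 := by
  ext ξ
  exact x.ker.starProjection_apply_mem ξ

lemma starProjection_ker_mul_eq_self {x y : H →L[ℂ] H} (hxy : x * y = 0) :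
    x.ker.starProjection * y = y := by
  ext ξ
  exact Submodule.starProjection_eq_self_iff.mpr congr($hxy ξ)

end ContinuousLinearMap

namespace VonNeumannAlgebra

open ContinuousLinearMap

variable {M : VonNeumannAlgebra H}

lemma isClosed (M : VonNeumannAlgebra H) : IsClosed (M : Set (H →L[ℂ] H)) :=
  M.centralizer_centralizer ▸ Set.isClosed_centralizer _

lemma cfc_mem {c : H →L[ℂ] H} (hc : c ∈ M) (f : ℝ → ℝ) : cfc f c ∈ M :=
  have : IsClosed (M.toStarSubalgebra : Set (H →L[ℂ] H)) := M.isClosed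
  _root_.cfc_mem (s := M.toStarSubalgebra) f hc

lemma starProjection_ker_mem {x : H →L[ℂ] H} (hx : x ∈ M) : x.ker.starProjection ∈ M := by
  rw [IsStarProjection.mem_iff isStarProjection_starProjection]
  intro y hy
  rw [Submodule.range_starProjection, Module.End.mem_invtSubmodule]
  intro ξ (hξ : x ξ = 0)
  have hxy : x * y = y * x := mem_commutant_iff.mp hy x hx
  exact (congr($hxy ξ) : x (y ξ) = y (x ξ)).trans (by rw [hξ, map_zero])

lemma exists_starProjection_mem_between {h h' : H →L[ℂ] H} (hM : h ∈ M) (h_nonneg : 0 ≤ h)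
    (h'_le_one : h' ≤ 1) (hh' : (1 - h) * h' = 0) :
    ∃ p ∈ M, IsStarProjection p ∧ h' ≤ p ∧ p ≤ h := by
  refine ⟨(1 - h).ker.starProjection, starProjection_ker_mem (sub_mem (one_mem M) hM),
    isStarProjection_starProjection,
    isStarProjection_starProjection.ge_of_mul_eq h'_le_one (starProjection_ker_mul_eq_self hh'),
    isStarProjection_starProjection.le_of_mul_eq h_nonneg ?_⟩
  have := mul_starProjection_ker (1 - h)
  rwa [sub_mul, one_mul, sub_eq_zero, eq_comm] at this

lemma exists_mem_adjoin_starProjections_norm_sub_le {c : H →L[ℂ] H} (hc : c ∈ M)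
    (hsa : IsSelfAdjoint c) {δ : ℝ} (hδ : 0 < δ) :
    ∃ b ∈ Algebra.adjoin ℂ {p | p ∈ M ∧ IsStarProjection p}, ‖c - b‖ ≤ δ := by
  set l := -‖c‖
  set N := ⌈2 * ‖c‖ / δ⌉₊
  have hspec : spectrum ℝ c ⊆ Set.Icc l (l + N * δ) := fun t ht => by
    have := abs_le.mp <| (spectrum.norm_le_norm_mul_of_mem ht).trans <|
      mul_le_of_le_one_right (norm_nonneg c) norm_id_le
    have : 2 * ‖c‖ ≤ N * δ := (div_le_iff₀ hδ).mp (Nat.le_ceil _)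
    constructor <;> linarith
  set h : ℕ → H →L[ℂ] H := fun i => cfc (ramp (l + i * δ) δ) c
  have hh_nonneg (i : ℕ) : 0 ≤ h i := cfc_nonneg fun t _ => ramp.nonneg hδ.le t
  have hh_le_one (i : ℕ) : h i ≤ 1 := cfc_le_one _ _ fun t _ => ramp.le_one hδ.le t
  have hh_mul (i : ℕ) : (1 - h i) * h (i + 1) = 0 := by
    have hramp : ramp (l + ((i + 1 : ℕ) : ℝ) * δ) δ = ramp (l + i * δ + δ) δ := by
      push_cast; ring_nf
    rw [← cfc_const_one ℝ c, ← cfc_sub _ _ _ (by fun_prop) (by fun_prop),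
      ← cfc_mul _ _ _ (by fun_prop) (by fun_prop), hramp]
    simp [ramp.one_sub_mul_ramp_add hδ]
  choose p hpM hp hhp hph using fun i =>
    exists_starProjection_mem_between (M.cfc_mem hc _) (hh_nonneg i) (hh_le_one (i + 1)) (hh_mul i)
  refine ⟨algebraMap ℝ _ l + δ • ∑ i ∈ Finset.range N, p i, ?_, ?_⟩
  · have hp_mem (i : ℕ) : p i ∈ Algebra.adjoin ℂ {p | p ∈ M ∧ IsStarProjection p} :=
      Algebra.subset_adjoin ⟨hpM i, hp i⟩
    rw [IsScalarTower.algebraMap_apply ℝ ℂ, ← Complex.coe_smul]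
    exact add_mem (Subalgebra.algebraMap_mem _ _)
      (Subalgebra.smul_mem _ (sum_mem fun i _ => hp_mem i) _)
  · have hsub : c - (algebraMap ℝ _ l + δ • ∑ i ∈ Finset.range N, p i)
        = δ • (∑ i ∈ Finset.range N, h i - ∑ i ∈ Finset.range N, p i) := by
      conv_lhs => rw [cfc_sum_ramp hsa hδ.ne' hspec]
      rw [smul_sub]
      abel
    rw [hsub, norm_smul, Real.norm_of_nonneg hδ.le]
    exact mul_le_of_le_one_right hδ.le
      (norm_sum_sub_sum_le_one_of_interlace hph hhp (hh_nonneg N) (hh_le_one 0))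

lemma mem_topologicalClosure_adjoin_starProjections {b : H →L[ℂ] H} (hb : b ∈ M) :
    b ∈ (Algebra.adjoin ℂ {p | p ∈ M ∧ IsStarProjection p}).topologicalClosure := by
  have hself {c : H →L[ℂ] H} (hc : c ∈ M) (hsa : IsSelfAdjoint c) :
      c ∈ (Algebra.adjoin ℂ {p | p ∈ M ∧ IsStarProjection p}).topologicalClosure := by
    refine Metric.mem_closure_iff.mpr fun ε hε => ?_
    obtain ⟨b, hb, hcb⟩ := exists_mem_adjoin_starProjections_norm_sub_le hc hsa (half_pos hε)
    exact ⟨b, hb, (dist_eq_norm c b).trans_lt (hcb.trans_lt (half_lt_self hε))⟩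
  rw [← realPart_add_I_smul_imaginaryPart b]
  exact add_mem (hself (StarSubalgebra.realPart_mem hb) (ℜ b).2)
    (Subalgebra.smul_mem _ (hself (StarSubalgebra.imaginaryPart_mem hb) (ℑ b).2) _)

lemma commute_of_forall_starProjection {a : H →L[ℂ] H}
    (ha : ∀ p ∈ M, IsStarProjection p → Commute a p) {b : H →L[ℂ] H} (hb : b ∈ M) :
    Commute a b := by
  have hle : (Algebra.adjoin ℂ {p | p ∈ M ∧ IsStarProjection p}).topologicalClosure ≤
      Subalgebra.centralizer ℂ {a} := by
    refine Subalgebra.topologicalClosure_minimal (Algebra.adjoin_le fun p hp => ?_) ?_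
    · exact (Subalgebra.mem_centralizer_iff ℂ).mpr fun _ h => h ▸ (ha p hp.1 hp.2).eq
    · simpa using Set.isClosed_centralizer {a}
  exact (Subalgebra.mem_centralizer_iff ℂ).mp
    (hle (mem_topologicalClosure_adjoin_starProjections hb)) a rfl

end VonNeumannAlgebra

end HilbertSpace

theorem central_iff_sas_le_general {H : Type*} [NormedAddCommGroup H] [InnerProductSpace ℂ H]
    [CompleteSpace H] (M : VonNeumannAlgebra H) (a : H →L[ℂ] H) :
    (∀ b ∈ M, a * b = b * a) ↔
      ∀ s : H →L[ℂ] H, s ∈ M → IsSelfAdjoint s → s * s = 1 →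
        (a - s * a * s).IsPositive := by
  refine ⟨fun h s hs _ hss => ?_, fun h b hb => ?_⟩
  · rw [← h s hs, mul_assoc, hss, mul_one, sub_self]
    exact ContinuousLinearMap.isPositive_zero
  · refine M.commute_of_forall_starProjection (fun p hp hproj => ?_) hb
    have hs : (2 : ℂ) • p - 1 ∈ M := sub_mem (M.toStarSubalgebra.smul_mem hp _) (one_mem M)
    have hsa := hproj.isSelfAdjoint_two_smul_sub_one
    have hss := hproj.two_smul_sub_one_mul_self
    have hpos := (ContinuousLinearMap.nonneg_iff_isPositive _).mpr (h _ hs hsa hss)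
    exact Commute.of_two_smul_sub_one (commute_of_conj_le hsa hss (sub_nonneg.mp hpos))

/-- A positive element `a` of a von Neumann algebra `M` is central iff `s a s ≤ a`
(in the Loewner order, i.e. `a - s a s` is positive) for every selfadjoint unitary `s ∈ M`. -/
theorem central_iff_sas_le {H : Type*} [NormedAddCommGroup H] [InnerProductSpace ℂ H]
    [CompleteSpace H] (M : VonNeumannAlgebra H) (a : H →L[ℂ] H) (haM : a ∈ M)
    (hpos : a.IsPositive) :
    (∀ b ∈ M, a * b = b * a) ↔
      ∀ s : H →L[ℂ] H, s ∈ M → IsSelfAdjoint s → s * s = 1 →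
        (a - s * a * s).IsPositive :=
  central_iff_sas_le_general M a
end

section
/- Let A be a unital C*-algebra, a a positive element of A, φ a positive continuous linear functional on A, and s a selfadjoint unitary element of A such that φ(s a s) < φ(a). Then there exists λ > 0 such that, setting ψ₁(x) = λ·φ(s x s) + φ(s x) + φ(x s) + λ⁻¹·φ(x) and ψ₂(x) = λ·φ(s x s) − φ(s x) − φ(x s) + λ⁻¹·φ(x), both ψ₁ and ψ₂ are positive continuous linear functionals, ψ₁ − ψ₂ is the functional x ↦ 2·(φ(s x) + φ(x s)), and 2·(φ(a) + φ(s a s)) > ψ₁(a) + ψ₂(a). -/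
open scoped ComplexOrder

lemma aux_real (α β : ℝ) (hβ : 0 ≤ β) (h : β < α) :
    ∃ l : ℝ, 0 < l ∧ l * β + l⁻¹ * α < α + β := by
  rcases eq_or_lt_of_le hβ with h0 | h0
  · refine ⟨2, by norm_num, ?_⟩
    rw [← h0]
    have : (0:ℝ) < α := h0 ▸ h
    norm_num
    linarith
  · have hα : (0:ℝ) < α := lt_trans h0 h
    refine ⟨Real.sqrt α / Real.sqrt β, by positivity, ?_⟩
    have hsa : Real.sqrt α ^ 2 = α := Real.sq_sqrt hα.le
    have hsb : Real.sqrt β ^ 2 = β := Real.sq_sqrt h0.le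
    have hsa0 : 0 < Real.sqrt α := Real.sqrt_pos.mpr hα
    have hsb0 : 0 < Real.sqrt β := Real.sqrt_pos.mpr h0
    have hne : Real.sqrt α ≠ Real.sqrt β := by
      intro hEq
      have : α = β := by rw [← hsa, ← hsb, hEq]
      exact absurd this (by linarith)
    have hpos : 0 < (Real.sqrt α - Real.sqrt β)^2 :=
      lt_of_le_of_ne (sq_nonneg _) (Ne.symm (pow_ne_zero 2 (sub_ne_zero.mpr hne)))
    rw [inv_div]
    have e1 : Real.sqrt α / Real.sqrt β * β = Real.sqrt α * Real.sqrt β := by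
      field_simp; nlinarith [hsb]
    have e2 : Real.sqrt β / Real.sqrt α * α = Real.sqrt α * Real.sqrt β := by
      field_simp; nlinarith [hsa]
    rw [e1, e2]
    nlinarith [hpos, hsa, hsb]

/-- Concrete form of Lemma 1: if `φ(sas) < φ(a)` for a positive `a`, a positive functional
`φ` and a symmetry `s`, then there is `λ > 0` such that the positive functionals
`ψ₁, ψ₂` built from `φ` satisfy `|ψ₁ - ψ₂|(a) = 2(φ(a) + φ(sas)) > ψ₁(a) + ψ₂(a)`. -/
theorem lemma_one_concrete {A : Type*} [CStarAlgebra A]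
    (a : A) (hapos : ∃ b : A, a = star b * b)
    (φ : A →L[ℂ] ℂ) (hφ : ∀ x : A, 0 ≤ φ (star x * x))
    (s : A) (hs : IsSelfAdjoint s) (hu : s * s = 1)
    (hlt : φ (s * a * s) < φ a) :
    ∃ l : ℝ, 0 < l ∧ ∃ ψ₁ ψ₂ : A →L[ℂ] ℂ,
      (∀ x : A, ψ₁ x = (l : ℂ) * φ (s * x * s) + φ (s * x) + φ (x * s) +
          (l : ℂ)⁻¹ * φ x) ∧
      (∀ x : A, ψ₂ x = (l : ℂ) * φ (s * x * s) - φ (s * x) - φ (x * s) +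
          (l : ℂ)⁻¹ * φ x) ∧
      (∀ x : A, 0 ≤ ψ₁ (star x * x)) ∧
      (∀ x : A, 0 ≤ ψ₂ (star x * x)) ∧
      (∀ x : A, ψ₁ x - ψ₂ x = 2 * (φ (s * x) + φ (x * s))) ∧
      ψ₁ a + ψ₂ a < 2 * (φ a + φ (s * a * s)) := by
  obtain ⟨b, hb⟩ := hapos
  have hαpos : 0 ≤ φ a := by rw [hb]; exact hφ b
  have hβpos : 0 ≤ φ (s * a * s) := by
    have : s * a * s = star (b * s) * (b * s) := by
      rw [hb, star_mul, hs.star_eq]; noncomm_ring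
    rw [this]; exact hφ (b * s)
  set α : ℝ := (φ a).re with hαdef
  set β : ℝ := (φ (s * a * s)).re with hβdef
  have hαeq : φ a = (α : ℂ) := Complex.eq_re_of_ofReal_le (by exact_mod_cast hαpos)
  have hβeq : φ (s * a * s) = (β : ℂ) := Complex.eq_re_of_ofReal_le (by exact_mod_cast hβpos)
  have hβα : β < α := by
    have := hlt
    rw [hαeq, hβeq] at this
    exact_mod_cast this
  have hβ0 : 0 ≤ β := by
    have := hβpos; rw [hβeq] at this; exact_mod_cast this
  obtain ⟨l, hl, hlkey⟩ := aux_real α β hβ0 hβα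
  set c : ℝ := Real.sqrt l with hcdef
  have hc0 : 0 < c := Real.sqrt_pos.mpr hl
  have hcc : c * c = l := Real.mul_self_sqrt hl.le
  set L : A →L[ℂ] A := ContinuousLinearMap.mul ℂ A s with hL
  set R : A →L[ℂ] A := (ContinuousLinearMap.mul ℂ A).flip s with hR
  set ψ₁ : A →L[ℂ] ℂ :=
    (l : ℂ) • (φ.comp (L.comp R)) + φ.comp L + φ.comp R + ((l : ℂ)⁻¹) • φ with hψ₁
  set ψ₂ : A →L[ℂ] ℂ :=
    (l : ℂ) • (φ.comp (L.comp R)) - φ.comp L - φ.comp R + ((l : ℂ)⁻¹) • φ with hψ₂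
  have hLR : ∀ x : A, L (R x) = s * x * s := fun x => by
    simp [hL, hR, mul_assoc]
  have hψ₁app : ∀ x : A, ψ₁ x = (l : ℂ) * φ (s * x * s) + φ (s * x) + φ (x * s) +
      (l : ℂ)⁻¹ * φ x := by
    intro x
    simp [hψ₁, hLR x, hL, hR, mul_assoc]
  have hψ₂app : ∀ x : A, ψ₂ x = (l : ℂ) * φ (s * x * s) - φ (s * x) - φ (x * s) +
      (l : ℂ)⁻¹ * φ x := by
    intro x
    simp [hψ₂, hLR x, hL, hR, mul_assoc]
  -- key algebraic expansion
  have expand : ∀ (d : ℝ) (x : A),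
      star ((c : ℂ) • (x * s) + (d : ℂ) • x) * ((c : ℂ) • (x * s) + (d : ℂ) • x)
        = ((c * c : ℝ) : ℂ) • (s * (star x * x) * s) + ((c * d : ℝ) : ℂ) • (s * (star x * x))
          + ((c * d : ℝ) : ℂ) • ((star x * x) * s) + ((d * d : ℝ) : ℂ) • (star x * x) := by
    intro d x
    have h1 : star ((c : ℂ) • (x * s)) = (c : ℂ) • (s * star x) := by
      simp [star_smul, star_mul, hs.star_eq, Complex.star_def, Complex.conj_ofReal]
    have h2 : star ((d : ℂ) • x) = (d : ℂ) • star x := by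
      simp [star_smul, Complex.star_def, Complex.conj_ofReal]
    rw [star_add, h1, h2]
    simp only [add_mul, mul_add, smul_mul_smul_comm, mul_assoc]
    push_cast
    rw [mul_comm (d:ℂ) (c:ℂ)]
    abel
  have hpos1 : ∀ x : A, 0 ≤ ψ₁ (star x * x) := by
    intro x
    have key := hφ ((c : ℂ) • (x * s) + ((c⁻¹ : ℝ) : ℂ) • x)
    rw [expand c⁻¹ x] at key
    have hcd : c * c⁻¹ = 1 := mul_inv_cancel₀ hc0.ne'
    have hdd : c⁻¹ * c⁻¹ = l⁻¹ := by rw [← mul_inv, hcc]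
    rw [hcc, hcd, hdd] at key
    simp only [map_add, map_smul, smul_eq_mul, Complex.ofReal_one, one_mul,
      Complex.ofReal_inv] at key
    rw [hψ₁app]
    exact key.trans_eq (by ring)
  have hpos2 : ∀ x : A, 0 ≤ ψ₂ (star x * x) := by
    intro x
    have key := hφ ((c : ℂ) • (x * s) + ((-c⁻¹ : ℝ) : ℂ) • x)
    rw [expand (-c⁻¹) x] at key
    have hcd : c * -c⁻¹ = -1 := by
      rw [mul_neg, mul_inv_cancel₀ hc0.ne']
    have hdd : -c⁻¹ * -c⁻¹ = l⁻¹ := by rw [neg_mul_neg, ← mul_inv, hcc]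
    rw [hcc, hcd, hdd] at key
    simp only [map_add, map_smul, smul_eq_mul, Complex.ofReal_neg, Complex.ofReal_one,
      neg_one_mul, Complex.ofReal_inv] at key
    rw [hψ₂app]
    exact key.trans_eq (by ring)
  refine ⟨l, hl, ψ₁, ψ₂, hψ₁app, hψ₂app, hpos1, hpos2, ?_, ?_⟩
  · intro x
    rw [hψ₁app, hψ₂app]; ring
  · rw [hψ₁app, hψ₂app, hαeq, hβeq]
    have e1 : (l:ℂ) * (β:ℂ) + φ (s * a) + φ (a * s) + (l:ℂ)⁻¹ * (α:ℂ) +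
        ((l:ℂ) * (β:ℂ) - φ (s * a) - φ (a * s) + (l:ℂ)⁻¹ * (α:ℂ))
        = ((2 * (l * β + l⁻¹ * α) : ℝ) : ℂ) := by push_cast; ring
    have e2 : (2:ℂ) * ((α:ℂ) + (β:ℂ)) = ((2 * (α + β) : ℝ) : ℂ) := by push_cast; ring
    rw [e1, e2]
    exact Complex.real_lt_real.mpr (by linarith)
end

section
/- Let A be a unital C*-algebra, ψ a positive continuous linear functional on A, and a a positive element of A. If |ψ(x a)| ≤ ‖x‖·ψ(a) for every x ∈ A, then the continuous linear functional x ↦ ψ(x a) is positive, and consequently ψ(x a) = ψ(a x) for every selfadjoint x ∈ A. -/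
/-!
The functional `φ x = ψ (x * a)` satisfies `‖φ‖ ≤ φ 1 = ψ a`, and any such functional is positive.
It is real on a selfadjoint `s`: testing `φ` on `s + t i`, whose norm squared is at most
`‖s‖² + t²`, bounds `t ↦ 2 t φ(1) Im φ(s)` from above, so `Im φ(s) = 0`. For `p ≥ 0` the element
`‖p‖ - p` has norm at most `‖p‖`, whence `|‖p‖ φ(1) - φ(p)| ≤ ‖p‖ φ(1)` and `φ(p) ≥ 0`.
Commutation follows because the positive functional `ψ` is hermitian:
`ψ (a * x) = conj ψ (x * a) = ψ (x * a)` when `x` is selfadjoint.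
-/

open scoped ComplexOrder

open Complex in
lemma IsSelfAdjoint.norm_add_smul_one_sq_le {A : Type*} [CStarAlgebra A] [Nontrivial A] {s : A}
    (hs : IsSelfAdjoint s) (t : ℝ) : ‖s + (t * I) • (1 : A)‖ ^ 2 ≤ ‖s‖ ^ 2 + t ^ 2 := by
  have hstar : star (s + (t * I) • (1 : A)) * (s + (t * I) • 1) = s * s + (t ^ 2 : ℝ) • 1 := by
    simp only [star_add, star_smul, hs.star_eq, star_one, add_mul, mul_add, smul_mul_assoc,
      mul_smul_comm, one_mul, mul_one]
    have hconj : star ((t : ℂ) * I) = -(t * I) := by simp [conj_ofReal]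
    have hsq : (t * I : ℂ) * -(t * I) = ((t ^ 2 : ℝ) : ℂ) := by
      push_cast; linear_combination (-(t : ℂ) ^ 2) * I_sq
    rw [hconj, smul_add, smul_smul, hsq, Complex.coe_smul, neg_smul]
    abel
  calc ‖s + (t * I) • (1 : A)‖ ^ 2 = ‖s * s + (t ^ 2 : ℝ) • (1 : A)‖ := by
        rw [sq, ← CStarRing.norm_star_mul_self, hstar]
    _ ≤ ‖s * s‖ + ‖(t ^ 2 : ℝ) • (1 : A)‖ := norm_add_le _ _
    _ = ‖s‖ ^ 2 + t ^ 2 := by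
        rw [norm_smul, CStarRing.norm_one, mul_one, Real.norm_of_nonneg (sq_nonneg t), sq ‖s‖,
          ← CStarRing.norm_star_mul_self, hs.star_eq]

namespace ContinuousLinearMap

variable {A : Type*} [CStarAlgebra A] {φ : A →L[ℂ] ℂ} {c : ℝ}

open Complex in
lemma im_apply_eq_zero_of_norm_le (h1 : φ 1 = c) (hφ : ‖φ‖ ≤ c) {s : A}
    (hs : IsSelfAdjoint s) : (φ s).im = 0 := by
  rcases subsingleton_or_nontrivial A with _ | _
  · simp [Subsingleton.elim s 0]
  rcases ((norm_nonneg φ).trans hφ).eq_or_lt with rfl | hc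
  · simp [norm_le_zero_iff.1 hφ]
  have hbound (t : ℝ) :
      (φ s).re ^ 2 + ((φ s).im + t * c) ^ 2 ≤ (‖s‖ ^ 2 + t ^ 2) * c ^ 2 := by
    calc (φ s).re ^ 2 + ((φ s).im + t * c) ^ 2 = ‖φ (s + (t * I) • 1)‖ ^ 2 := by
          rw [map_add, map_smul, h1, Complex.sq_norm, normSq_apply]
          simp only [smul_eq_mul, add_re, add_im, mul_re, mul_im, ofReal_re, ofReal_im, I_re, I_im]
          ring
      _ ≤ (‖φ‖ * ‖s + (t * I) • (1 : A)‖) ^ 2 := by gcongr; exact le_opNorm φ _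
      _ = ‖φ‖ ^ 2 * ‖s + (t * I) • (1 : A)‖ ^ 2 := mul_pow _ _ _
      _ ≤ c ^ 2 * (‖s‖ ^ 2 + t ^ 2) := by
          gcongr
          exact hs.norm_add_smul_one_sq_le t
      _ = (‖s‖ ^ 2 + t ^ 2) * c ^ 2 := mul_comm _ _
  have hlin (t : ℝ) : t * (2 * ((φ s).im * c)) ≤ ‖s‖ ^ 2 * c ^ 2 := by
    nlinarith [hbound t, sq_nonneg (φ s).re, sq_nonneg (φ s).im]
  have hzero : (φ s).im * c = 0 := by
    by_contra hne
    have := hlin ((‖s‖ ^ 2 * c ^ 2 + 1) / (2 * ((φ s).im * c)))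
    rw [div_mul_cancel₀ _ (mul_ne_zero two_ne_zero hne)] at this
    linarith
  exact (mul_eq_zero.1 hzero).resolve_right hc.ne'

lemma apply_nonneg_of_norm_le [PartialOrder A] [StarOrderedRing A] (h1 : φ 1 = c) (hφ : ‖φ‖ ≤ c)
    {p : A} (hp : 0 ≤ p) : 0 ≤ φ p := by
  set r := ‖p‖
  have hreal : φ p = (φ p).re :=
    Complex.ext rfl (by simp [im_apply_eq_zero_of_norm_le h1 hφ hp.isSelfAdjoint])
  have hgap : ‖algebraMap ℝ A r - p‖ ≤ r :=
    (CStarAlgebra.norm_le_iff_le_algebraMap _ (norm_nonneg p)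
      (sub_nonneg.2 hp.isSelfAdjoint.le_algebraMap_norm_self)).2 (sub_le_self _ hp)
  have hdist : |r * c - (φ p).re| ≤ r * c :=
    calc |r * c - (φ p).re| = ‖φ (algebraMap ℝ A r - p)‖ := by
          rw [map_sub, Algebra.algebraMap_eq_smul_one, ← Complex.coe_smul, map_smul, h1, hreal,
            smul_eq_mul, ← Complex.ofReal_mul, ← Complex.ofReal_sub, Complex.norm_real,
            Real.norm_eq_abs, Complex.ofReal_re]
      _ ≤ ‖φ‖ * ‖algebraMap ℝ A r - p‖ := le_opNorm φ _
      _ ≤ c * r := mul_le_mul hφ hgap (norm_nonneg _) ((norm_nonneg φ).trans hφ)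
      _ = r * c := mul_comm _ _
  rw [hreal, Complex.zero_le_real]
  linarith [(abs_le.1 hdist).2]

lemma map_star_of_star_mul_self_nonneg (hφ : ∀ x : A, 0 ≤ φ (star x * x)) (x : A) :
    φ (star x) = star (φ x) := by
  let _ := CStarAlgebra.spectralOrder A
  have _ := CStarAlgebra.spectralOrderedRing A
  let f : A →ₚ[ℂ] ℂ := .mk₀ φ.toLinearMap fun p hp ↦ by
    obtain ⟨y, rfl⟩ := CStarAlgebra.nonneg_iff_eq_star_mul_self.1 hp
    exact hφ y
  exact map_star f x

end ContinuousLinearMap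

/-- If a positive functional `ψ` and a positive element `a` of a unital C*-algebra satisfy
`|ψ(xa)| ≤ ‖x‖·ψ(a)` for every `x`, then the functional `x ↦ ψ(xa)` is positive, and
consequently `ψ(xa) = ψ(ax)` for every selfadjoint `x`. -/
theorem positivity_and_commutation_of_norm_attained {A : Type*} [CStarAlgebra A]
    (ψ : A →L[ℂ] ℂ) (hψ : ∀ x : A, 0 ≤ ψ (star x * x))
    (a : A) (hapos : ∃ b : A, a = star b * b)
    (h : ∀ x : A, (‖ψ (x * a)‖ : ℂ) ≤ (‖x‖ : ℂ) * ψ a) :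
    (∀ x : A, 0 ≤ ψ ((star x * x) * a)) ∧
    (∀ x : A, IsSelfAdjoint x → ψ (x * a) = ψ (a * x)) := by
  let _ := CStarAlgebra.spectralOrder A
  have _ := CStarAlgebra.spectralOrderedRing A
  obtain ⟨b, hb⟩ := hapos
  have ha : IsSelfAdjoint a := hb ▸ .star_mul_self b
  have hψa : 0 ≤ ψ a := hb ▸ hψ b
  have hψa_re : ψ a = (ψ a).re := Complex.eq_re_of_ofReal_le hψa
  let φ : A →L[ℂ] ℂ := ψ.comp ((ContinuousLinearMap.mul ℂ A).flip a)
  have hφ1 : φ 1 = (ψ a).re := by rw [← hψa_re]; exact congrArg ψ (one_mul a)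
  have hφ : ‖φ‖ ≤ (ψ a).re := by
    refine φ.opNorm_le_bound (Complex.nonneg_iff.1 hψa).1 fun x ↦ ?_
    rw [mul_comm]
    exact_mod_cast hψa_re ▸ h x
  refine ⟨fun x ↦ φ.apply_nonneg_of_norm_le hφ1 hφ (star_mul_self_nonneg x), fun x hx ↦ ?_⟩
  calc ψ (x * a) = star (ψ (x * a)) :=
        (Complex.conj_eq_iff_im.2 (φ.im_apply_eq_zero_of_norm_le hφ1 hφ hx)).symm
    _ = ψ (star (x * a)) := (ψ.map_star_of_star_mul_self_nonneg hψ _).symm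
    _ = ψ (a * x) := by rw [star_mul, hx.star_eq, ha.star_eq]
end

section
/- Let M be a von Neumann algebra acting on a complex Hilbert space H and let a be a positive element of M. Then a belongs to the center of M if and only if |⟨u a ξ, ξ⟩| ≤ ⟨a ξ, ξ⟩ for every unitary element u of M and every vector ξ ∈ H. -/
/-!
If `a ≥ 0` commutes with a unitary `u`, then `⟪u a ξ, ξ⟫ = ⟪√a (u ξ), √a ξ⟫` and
`‖√a (u ξ)‖ = ‖√a ξ‖`, so Cauchy–Schwarz bounds it by `‖√a ξ‖² = ⟪a ξ, ξ⟫`.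

Conversely, for selfadjoint `h ∈ M` the operators `exp (i t h)` are unitaries of `M`, so
`t ↦ re ⟪exp (i t h) a ξ, ξ⟫` attains its maximum at `t = 0`. Its derivative there vanishes,
i.e. `⟪h a ξ, ξ⟫` is real for every `ξ`. Thus `h a` is selfadjoint, which for selfadjoint `h`
and `a` means that they commute; and `M` is spanned by its selfadjoint elements.
-/

open scoped ComplexOrder ComplexInnerProductSpace ComplexStarModule

open NormedSpace (exp)
open Complex (I)

theorem ContinuousLinearMap.re_apply_eq_zero_of_isLocalMax {A : Type*} [NormedRing A]
    [NormedAlgebra ℂ A] [CompleteSpace A] (L : A →L[ℂ] ℂ) (x : A)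
    (hmax : IsLocalMax (fun t : ℝ => (L (exp ((t : ℂ) • x))).re) 0) : (L x).re = 0 := by
  have hderiv := L.hasFDerivAt.comp_hasDerivAt (0 : ℂ) (hasDerivAt_exp_smul_const x (0 : ℂ))
  rw [zero_smul, NormedSpace.exp_zero, one_mul] at hderiv
  exact hmax.hasDerivAt_eq_zero hderiv.real_of_complex

theorem IsSelfAdjoint.exp_ofReal_smul_I_smul_mem_unitary {A : Type*} [NormedRing A]
    [NormedAlgebra ℂ A] [StarRing A] [ContinuousStar A] [CompleteSpace A] [StarModule ℂ A]
    {h : A} (hh : IsSelfAdjoint h) (t : ℝ) : NormedSpace.exp ((t : ℂ) • (I • h)) ∈ unitary A := by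
  let : NormedAlgebra ℚ A := .restrictScalars ℚ ℂ A
  apply NormedSpace.exp_mem_unitary_of_mem_skewAdjoint
  rw [Complex.coe_smul]
  exact skewAdjoint.smul_mem t hh.I_smul_mem_skewAdjoint

theorem StarSubalgebra.commute_of_forall_isSelfAdjoint {A : Type*} [Ring A] [StarRing A]
    [Algebra ℂ A] [StarModule ℂ A] (S : StarSubalgebra ℂ A) {a : A}
    (h : ∀ x ∈ S, IsSelfAdjoint x → Commute a x) {b : A} (hb : b ∈ S) : Commute a b := by
  have hre : (ℜ b : A) ∈ S := by
    rw [realPart_apply_coe, ← Complex.coe_smul]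
    exact S.smul_mem (add_mem hb (star_mem hb)) _
  have him : (ℑ b : A) ∈ S := by
    rw [imaginaryPart_apply_coe, ← Complex.coe_smul]
    exact S.smul_mem (S.smul_mem (sub_mem hb (star_mem hb)) _) _
  rw [← realPart_add_I_smul_imaginaryPart b]
  exact (h _ hre (ℜ b).2).add_right ((h _ him (ℑ b).2).smul_right I)

section Hilbert

variable {H : Type*} [NormedAddCommGroup H] [InnerProductSpace ℂ H] [CompleteSpace H]

theorem VonNeumannAlgebra.exp_mem (M : VonNeumannAlgebra H) {x : H →L[ℂ] H} (hx : x ∈ M) :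
    exp x ∈ M := by
  rw [← SetLike.mem_coe, ← M.centralizer_centralizer]
  exact fun z hz => (show Commute x z from hz x hx).exp_left.symm

namespace ContinuousLinearMap

theorem isPositive_sqrt (a : H →L[ℂ] H) : (CFC.sqrt a).IsPositive :=
  (nonneg_iff_isPositive _).mp (CFC.sqrt_nonneg a)

theorem IsPositive.sqrt_apply_sqrt_apply {a : H →L[ℂ] H} (ha : a.IsPositive) (x : H) :
    CFC.sqrt a (CFC.sqrt a x) = a x :=
  DFunLike.congr_fun (CFC.sqrt_mul_sqrt_self a ((nonneg_iff_isPositive a).mpr ha)) x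

theorem IsPositive.norm_sqrt_apply_sq {a : H →L[ℂ] H} (ha : a.IsPositive) (x : H) :
    ‖CFC.sqrt a x‖ ^ 2 = RCLike.re ⟪a x, x⟫ := by
  rw [@norm_sq_eq_re_inner ℂ, (isPositive_sqrt a).inner_left_eq_inner_right,
    ha.sqrt_apply_sqrt_apply, inner_re_symm]

omit [CompleteSpace H] in
theorem IsPositive.ofReal_le_inner_iff {a : H →L[ℂ] H} (ha : a.IsPositive) (r : ℝ) (x : H) :
    (r : ℂ) ≤ ⟪a x, x⟫ ↔ r ≤ RCLike.re ⟪a x, x⟫ := by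
  rw [← ha.isSymmetric.coe_reApplyInnerSelf_apply]
  exact Complex.real_le_real

theorem IsPositive.norm_inner_mul_apply_le {a u : H →L[ℂ] H} (ha : a.IsPositive)
    (hu : u ∈ unitary (H →L[ℂ] H)) (hau : Commute a u) (ξ : H) :
    ‖⟪(u * a) ξ, ξ⟫‖ ≤ RCLike.re ⟪a ξ, ξ⟫ := by
  set b := CFC.sqrt a
  have hau' : ∀ x, a (u x) = u (a x) := DFunLike.congr_fun hau.eq
  have hnorm : ‖b (u ξ)‖ = ‖b ξ‖ := by
    rw [← sq_eq_sq₀ (norm_nonneg _) (norm_nonneg _), ha.norm_sqrt_apply_sq,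
      ha.norm_sqrt_apply_sq, hau', inner_map_map_of_mem_unitary hu]
  calc ‖⟪(u * a) ξ, ξ⟫‖ = ‖⟪b (b (u ξ)), ξ⟫‖ := by rw [ha.sqrt_apply_sqrt_apply, hau']; rfl
    _ = ‖⟪b (u ξ), b ξ⟫‖ := by rw [(isPositive_sqrt a).inner_left_eq_inner_right]
    _ ≤ ‖b (u ξ)‖ * ‖b ξ‖ := norm_inner_le_norm _ _
    _ = RCLike.re ⟪a ξ, ξ⟫ := by rw [hnorm, ← sq, ha.norm_sqrt_apply_sq]

theorem commute_of_isLocalMax_re_inner {a h : H →L[ℂ] H} (ha : IsSelfAdjoint a)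
    (hh : IsSelfAdjoint h)
    (hmax : ∀ ξ, IsLocalMax (fun t : ℝ => RCLike.re ⟪(exp ((t : ℂ) • (I • h)) * a) ξ, ξ⟫) 0) :
    Commute a h := by
  have him : ∀ ξ, (⟪(h * a) ξ, ξ⟫).im = 0 := by
    intro ξ
    have := ((innerSL ℂ ξ).comp (apply ℂ H (a ξ))).re_apply_eq_zero_of_isLocalMax (I • h)
      (by simpa [inner_re_symm] using hmax ξ)
    rw [← inner_conj_symm, Complex.conj_im, neg_eq_zero]
    simpa [inner_smul_right] using this
  have hha : IsSelfAdjoint (h * a) := isSelfAdjoint_iff_isSymmetric.mpr <|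
    (LinearMap.isSymmetric_iff_inner_map_self_real _).mpr fun ξ =>
      Complex.conj_eq_iff_im.mpr (him ξ)
  exact ((hh.commute_iff ha).mpr hha).symm

end ContinuousLinearMap

end Hilbert

theorem central_iff_abs_inner_le_general {H : Type*} [NormedAddCommGroup H]
    [InnerProductSpace ℂ H] [CompleteSpace H] (M : VonNeumannAlgebra H)
    (a : H →L[ℂ] H) (hpos : a.IsPositive) :
    (∀ b ∈ M, a * b = b * a) ↔
      ∀ u : H →L[ℂ] H, u ∈ M → star u * u = 1 → u * star u = 1 →
        ∀ ξ : H, (‖⟪(u * a) ξ, ξ⟫‖ : ℂ) ≤ ⟪a ξ, ξ⟫ := by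
  constructor
  · intro hcomm u huM hu1 hu2 ξ
    exact (hpos.ofReal_le_inner_iff _ ξ).mpr <|
      hpos.norm_inner_mul_apply_le (Unitary.mem_iff.mpr ⟨hu1, hu2⟩) (hcomm u huM) ξ
  · intro hle b hb
    refine (M.toStarSubalgebra.commute_of_forall_isSelfAdjoint (fun h hhM hh => ?_) hb).eq
    refine ContinuousLinearMap.commute_of_isLocalMax_re_inner hpos.isSelfAdjoint hh fun ξ =>
      Filter.Eventually.of_forall fun t => ?_
    set u := exp ((t : ℂ) • (I • h))
    have huM : u ∈ M :=
      M.exp_mem (M.toStarSubalgebra.smul_mem (M.toStarSubalgebra.smul_mem hhM I) t)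
    obtain ⟨hu1, hu2⟩ := Unitary.mem_iff.mp (hh.exp_ofReal_smul_I_smul_mem_unitary t)
    calc RCLike.re ⟪(u * a) ξ, ξ⟫ ≤ ‖⟪(u * a) ξ, ξ⟫‖ := Complex.re_le_norm _
      _ ≤ RCLike.re ⟪a ξ, ξ⟫ := (hpos.ofReal_le_inner_iff _ ξ).mp (hle u huM hu1 hu2 ξ)
      _ = _ := by simp

/-- Vector-state form of the Gardner-type characterization: a positive element `a` of a
von Neumann algebra `M` is central iff `|⟨u a ξ, ξ⟩| ≤ ⟨a ξ, ξ⟩` for every unitary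
`u ∈ M` and every vector `ξ`. -/
theorem central_iff_abs_inner_le {H : Type*} [NormedAddCommGroup H]
    [InnerProductSpace ℂ H] [CompleteSpace H] (M : VonNeumannAlgebra H)
    (a : H →L[ℂ] H) (haM : a ∈ M) (hpos : a.IsPositive) :
    (∀ b ∈ M, a * b = b * a) ↔
      ∀ u : H →L[ℂ] H, u ∈ M → star u * u = 1 → u * star u = 1 →
        ∀ ξ : H, (‖⟪(u * a) ξ, ξ⟫‖ : ℂ) ≤ ⟪a ξ, ξ⟫ :=
  central_iff_abs_inner_le_general M a hpos
end

section
/- Let A be a unital C*-algebra and let a be a positive element of A. Then a belongs to the center of A if and only if |φ(u a)| ≤ φ(a) for every unitary element u of A and every positive continuous linear functional φ on A. -/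
/-!
If `a = b⋆b` is central and `u` is unitary, then `φ(ua) = φ((bu⋆)⋆ b)` and `(bu⋆)⋆(bu⋆) = a`, so
the Cauchy–Schwarz inequality for `φ` gives `|φ(ua)| ≤ φ(a)`.

Conversely, for self-adjoint `h` the real function `t ↦ Re φ(exp(ith) a)` is maximal at `t = 0`,
so its derivative `-Im φ(ha)` vanishes. Since `φ(ah) = conj φ(ha)` for a positive `φ`, every
positive functional kills the self-adjoint element `i(ha - ah)`, and positive functionals separate
self-adjoint elements (Hahn–Banach applied to the closed cone of positive elements). Hence `a`
commutes with self-adjoint elements, and so with everything.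
-/

open scoped ComplexOrder InnerProductSpace
open Complex NormedSpace

theorem ContinuousLinearMap.im_apply_mul_eq_zero_of_re_apply_unitary_mul_le
    {A : Type*} [CStarAlgebra A] {φ : A →L[ℂ] ℂ} {a : A}
    (hmax : ∀ u ∈ unitary A, (φ (u * a)).re ≤ (φ a).re) {h : A} (hh : IsSelfAdjoint h) :
    (φ (h * a)).im = 0 := by
  have hderiv : HasDerivAt (fun t : ℝ => φ (exp (t • (I • h)) * a)) (φ (I • h * a)) 0 := by
    simpa [Function.comp_def] using (φ.restrictScalars ℝ).hasFDerivAt.comp_hasDerivAt 0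
      ((hasDerivAt_exp_smul_const' (𝕂 := ℝ) (I • h) 0).mul_const a)
  have hlocalMax : IsLocalMax (fun t : ℝ => (φ (exp (t • (I • h)) * a)).re) 0 :=
    Filter.Eventually.of_forall fun t => by
      have := hmax _ (selfAdjoint.expUnitary (t • ⟨h, hh⟩)).2
      rw [selfAdjoint.expUnitary_coe] at this
      simpa [smul_comm t I h] using this
  simpa [smul_mul_assoc] using
    hlocalMax.hasDerivAt_eq_zero (reCLM.hasFDerivAt.comp_hasDerivAt 0 hderiv)

section NonUnital

variable {A : Type*} [NonUnitalCStarAlgebra A] [PartialOrder A] [StarOrderedRing A]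

def PositiveLinearMap.toContinuousLinearMap (f : A →ₚ[ℂ] ℂ) : A →L[ℂ] ℂ :=
  ⟨f.toLinearMap, map_continuous f⟩

theorem IsSelfAdjoint.nonneg_of_forall_positiveLinearMap_re_apply_nonneg {w : A}
    (hw : IsSelfAdjoint w) (h : ∀ f : A →ₚ[ℂ] ℂ, 0 ≤ (f w).re) : 0 ≤ w := by
  by_contra hw'
  obtain ⟨g, hg, hgw⟩ := (ProperCone.positive ℝ A).hyperplane_separation_point hw'
  -- Symmetrizing `g` under `star` makes its complexification real and nonnegative on `0 ≤ x`.
  let gsymm : StrongDual ℝ A := g + g.comp ((starL' ℝ : A ≃L[ℝ] A) : A →L[ℝ] A)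
  have hgsymm : ∀ x, IsSelfAdjoint x → gsymm x = 2 * g x := fun x hx => by
    simp [gsymm, hx.star_eq, two_mul]
  have hgsymm_I : ∀ x, IsSelfAdjoint x → gsymm (I • x) = 0 := fun x hx => by
    simp [gsymm, hx.star_eq]
  let ψ : StrongDual ℂ A := StrongDual.extendRCLike gsymm
  have hre : ∀ x, (ψ x).re = gsymm x := StrongDual.re_extendRCLike_apply (𝕜 := ℂ) gsymm
  have him : ∀ x, (ψ x).im = -gsymm (I • x) := StrongDual.im_extendRCLike_apply (𝕜 := ℂ) gsymm
  let f : A →ₚ[ℂ] ℂ := .mk₀ ψ.toLinearMap fun x hx => by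
    change 0 ≤ ψ x
    rw [Complex.nonneg_iff, hre, him, hgsymm x (.of_nonneg hx), hgsymm_I x (.of_nonneg hx),
      neg_zero]
    exact ⟨mul_nonneg zero_le_two (hg x hx), rfl⟩
  have hfw : (f w).re = 2 * g w := hgsymm w hw ▸ hre w
  linarith [h f]

theorem IsSelfAdjoint.eq_zero_of_forall_positiveLinearMap_apply_eq_zero {w : A}
    (hw : IsSelfAdjoint w) (h : ∀ f : A →ₚ[ℂ] ℂ, f w = 0) : w = 0 :=
  le_antisymm
    (neg_nonneg.mp <| hw.neg.nonneg_of_forall_positiveLinearMap_re_apply_nonneg fun f => by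
      simp [h f])
    (hw.nonneg_of_forall_positiveLinearMap_re_apply_nonneg fun f => by simp [h f])

end NonUnital

section Unital

variable {A : Type*} [CStarAlgebra A] [PartialOrder A] [StarOrderedRing A]

theorem PositiveLinearMap.norm_apply_unitary_mul_le (f : A →ₚ[ℂ] ℂ) {a u : A} (ha : 0 ≤ a)
    (hu : u ∈ unitary A) (hau : Commute a (star u)) : (‖f (u * a)‖ : ℂ) ≤ f a := by
  obtain ⟨b, rfl⟩ := CStarAlgebra.nonneg_iff_eq_star_mul_self.mp ha
  have hua : u * (star b * b) = star (b * star u) * b := by simp [star_mul, mul_assoc]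
  have hnorm : ‖f.toPreGNS (b * star u)‖ = ‖f.toPreGNS b‖ := by
    simp only [preGNS_norm_def, ofPreGNS_toPreGNS]
    rw [star_mul, star_star, mul_assoc, ← mul_assoc (star b), hau.eq, ← mul_assoc,
      Unitary.mul_star_self_of_mem hu, one_mul]
  calc (‖f (u * (star b * b))‖ : ℂ) = ‖⟪f.toPreGNS (b * star u), f.toPreGNS b⟫_ℂ‖ := by
        rw [preGNS_inner_def, hua]; rfl
    _ ≤ (‖f.toPreGNS (b * star u)‖ * ‖f.toPreGNS b‖ : ℝ) := by
        exact_mod_cast norm_inner_le_norm _ _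
    _ = f (star b * b) := by rw [hnorm, ← sq]; push_cast; exact f.preGNS_norm_sq _

theorem commute_of_forall_positiveLinearMap_re_apply_unitary_mul_le {a : A}
    (ha : IsSelfAdjoint a)
    (hmax : ∀ f : A →ₚ[ℂ] ℂ, ∀ u ∈ unitary A, (f (u * a)).re ≤ (f a).re) (b : A) :
    Commute a b := by
  have commute_of_isSelfAdjoint : ∀ h, IsSelfAdjoint h → Commute a h := fun h hh => by
    have hsa : IsSelfAdjoint (I • (h * a - a * h)) := by
      rw [IsSelfAdjoint, star_smul, star_sub, star_mul, star_mul, ha.star_eq, hh.star_eq,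
        Complex.star_def, conj_I, neg_smul, ← smul_neg, neg_sub]
    have hzero : I • (h * a - a * h) = 0 := by
      refine hsa.eq_zero_of_forall_positiveLinearMap_apply_eq_zero fun f => ?_
      have him : (f (h * a)).im = 0 :=
        f.toContinuousLinearMap.im_apply_mul_eq_zero_of_re_apply_unitary_mul_le (hmax f) hh
      have hstar : f (a * h) = star (f (h * a)) := by
        rw [← map_star, star_mul, ha.star_eq, hh.star_eq]
      rw [map_smul, map_sub, hstar, Complex.star_def, Complex.conj_eq_iff_im.mpr him, sub_self,
        smul_zero]
    exact (sub_eq_zero.mp ((smul_eq_zero.mp hzero).resolve_left I_ne_zero)).symm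
  rw [← realPart_add_I_smul_imaginaryPart b]
  exact (commute_of_isSelfAdjoint _ (realPart b).2).add_right
    ((commute_of_isSelfAdjoint _ (imaginaryPart b).2).smul_right I)

theorem commute_iff_forall_positiveLinearMap_norm_apply_unitary_mul_le {a : A} (ha : 0 ≤ a) :
    (∀ b, Commute a b) ↔ ∀ u ∈ unitary A, ∀ f : A →ₚ[ℂ] ℂ, (‖f (u * a)‖ : ℂ) ≤ f a := by
  refine ⟨fun hcomm u hu f => f.norm_apply_unitary_mul_le ha hu (hcomm _), fun hmax => ?_⟩
  refine commute_of_forall_positiveLinearMap_re_apply_unitary_mul_le (.of_nonneg ha)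
    fun f u hu => ?_
  calc (f (u * a)).re ≤ ‖f (u * a)‖ := re_le_norm _
    _ ≤ (f a).re := by simpa using (Complex.le_def.mp (hmax u hu f)).1

end Unital

/-- Gardner-type characterization in a unital C*-algebra: a positive element `a` is
central iff `|φ(ua)| ≤ φ(a)` for every unitary `u` and every positive functional `φ`. -/
theorem central_iff_abs_phi_unitary_le {A : Type*} [CStarAlgebra A]
    (a : A) (hapos : ∃ b : A, a = star b * b) :
    (∀ b : A, a * b = b * a) ↔
      ∀ u ∈ unitary A, ∀ φ : A →L[ℂ] ℂ, (∀ x : A, 0 ≤ φ (star x * x)) →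
        ((‖φ (u * a)‖ : ℝ) : ℂ) ≤ φ a := by
  let := CStarAlgebra.spectralOrder A
  let := CStarAlgebra.spectralOrderedRing A
  refine (commute_iff_forall_positiveLinearMap_norm_apply_unitary_mul_le
    (CStarAlgebra.nonneg_iff_eq_star_mul_self.mpr hapos)).trans
    ⟨fun h u hu φ hφ => h u hu (.mk₀ φ fun x hx => ?_), fun h u hu f =>
      h u hu f.toContinuousLinearMap fun x => f.map_nonneg (star_mul_self_nonneg x)⟩
  obtain ⟨y, rfl⟩ := CStarAlgebra.nonneg_iff_eq_star_mul_self.mp hx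
  exact hφ y
end
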